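/- (Semantic source coding theorem, converse part) Let U be a finite set, p a probability mass function on U, and {U_s : s ∈ S} a partition of U with semantic entropy H_s(Ũ); write s(u) for the class index of u. If R < H_s(Ũ), then for any sequence of codes consisting of encoders φ_n : U^n → M_n with |M_n| ≤ 2^{nR} and decoders ψ_n : M_n → U^n, the error probability P_e^(n) = Pr( ∃k ≤ n, s(ψ_n(φ_n(U_1,...,U_n))_k) ≠ s(U_k) ) tends to 1 as n → ∞, where U_1,...,U_n are i.i.d. with distribution p. -/

import Mathlib

open Finset
open scoped Classical

/-- `P(U_s)`, where `U_s = c⁻¹' {s}`. -/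
noncomputable def Pclass {U S : Type*} [Fintype U] (p : U → ℝ) (c : U → S) (s : S) : ℝ :=
  ∑ u : U, if c u = s then p u else 0

/-- The semantic entropy `H_s(Ũ)`. -/
noncomputable def semEntropy {U S : Type*} [Fintype U] [Fintype S]
    (p : U → ℝ) (c : U → S) : ℝ :=
  -∑ s : S, Pclass p c s * Real.logb 2 (Pclass p c s)

noncomputable def shEntropy {U : Type*} [Fintype U] (p : U → ℝ) : ℝ :=
  -∑ u : U, p u * Real.logb 2 (p u)

/-!
Correct decoding forces the class sequence `c ∘ x` of the source word into the set of class
sequences of the at most `2^{nR}` codewords, and `c ∘ x` is i.i.d. with law `q = P(U_s)`.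
By Chebyshev's inequality for the self-information `-log₂ q`, outside a set of probability
`O(1/n)` every class sequence has probability at most `2^{-n(H_s - δ)}`, so any `2^{nR}` class
sequences carry probability at most `2^{-nδ} + O(1/n)`; take `δ = (H_s - R) / 2`.
-/

theorem sq_mul_sum_filter_le_abs_le {β : Type*} (s : Finset β) (w Y : β → ℝ)
    (hw : ∀ x ∈ s, 0 ≤ w x) {ε : ℝ} (hε : 0 ≤ ε) :
    ε ^ 2 * ∑ x ∈ s with ε ≤ |Y x|, w x ≤ ∑ x ∈ s, w x * Y x ^ 2 := by
  rw [mul_sum]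
  calc ∑ x ∈ s with ε ≤ |Y x|, ε ^ 2 * w x
      ≤ ∑ x ∈ s with ε ≤ |Y x|, w x * Y x ^ 2 := by
        refine sum_le_sum fun x hx => ?_
        rw [mem_filter] at hx
        rw [mul_comm, ← sq_abs (Y x)]
        exact mul_le_mul_of_nonneg_left (pow_le_pow_left₀ hε hx.2 2) (hw x hx.1)
    _ ≤ ∑ x ∈ s, w x * Y x ^ 2 :=
        sum_le_sum_of_subset_of_nonneg (filter_subset _ _)
          fun x hx _ => mul_nonneg (hw x hx) (sq_nonneg _)

theorem prod_le_rpow_sum_logb {ι : Type*} {s : Finset ι} {x : ι → ℝ}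
    (hx : ∀ i ∈ s, 0 ≤ x i) {b : ℝ} (hb : 0 < b) (hb1 : b ≠ 1) :
    ∏ i ∈ s, x i ≤ b ^ (∑ i ∈ s, Real.logb b (x i)) := by
  by_cases hzero : ∃ i ∈ s, x i = 0
  · obtain ⟨i, hi, hxi⟩ := hzero
    rw [prod_eq_zero hi hxi]
    positivity
  · push Not at hzero
    rw [Real.rpow_sum_of_pos hb]
    exact (prod_congr rfl fun i hi =>
      Real.rpow_logb hb hb1 ((hx i hi).lt_of_ne' (hzero i hi))).symm.le

section ProductWeights

variable {α ι : Type*} [Fintype α] [Fintype ι] [DecidableEq ι] (q : α → ℝ)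

theorem sum_pi_prod_mul_prod (F : ι → α → ℝ) :
    ∑ t : ι → α, (∏ k, q (t k)) * ∏ k, F k (t k) = ∏ k, ∑ a, q a * F k a := by
  simp_rw [← prod_mul_distrib]
  exact (Fintype.prod_sum fun k a => q a * F k a).symm

theorem sum_pi_prod_eq_one (hq : ∑ a, q a = 1) : ∑ t : ι → α, ∏ k, q (t k) = 1 := by
  simpa [hq] using sum_pi_prod_mul_prod q (fun _ _ => (1 : ℝ))

theorem sum_pi_prod_mul_apply (hq : ∑ a, q a = 1) (f : α → ℝ) (j : ι) :
    ∑ t : ι → α, (∏ k, q (t k)) * f (t j) = ∑ a, q a * f a := by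
  simpa [apply_ite, hq] using sum_pi_prod_mul_prod q (fun k a => if k = j then f a else 1)

theorem sum_pi_prod_mul_apply_mul_apply (hq : ∑ a, q a = 1) (f g : α → ℝ) {j l : ι}
    (hjl : j ≠ l) :
    ∑ t : ι → α, (∏ k, q (t k)) * (f (t j) * g (t l))
      = (∑ a, q a * f a) * ∑ a, q a * g a := by
  have key := sum_pi_prod_mul_prod q
    (fun k a => if k = j then f a else if k = l then g a else 1)
  have hprod : ∀ t : ι → α,
      ∏ k, (if k = j then f (t k) else if k = l then g (t k) else 1) = f (t j) * g (t l) := by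
    intro t
    rw [Fintype.prod_eq_mul j l hjl (fun k hk => by simp [hk.1, hk.2])]
    simp [hjl.symm]
  rw [Fintype.prod_eq_mul j l hjl (fun k hk => by simp [hk.1, hk.2, hq])] at key
  simpa [hprod, hjl.symm] using key

theorem sum_pi_prod_mul_sum_sq (hq : ∑ a, q a = 1) (f : α → ℝ) (hf : ∑ a, q a * f a = 0) :
    ∑ t : ι → α, (∏ k, q (t k)) * (∑ k, f (t k)) ^ 2
      = Fintype.card ι * ∑ a, q a * f a ^ 2 := by
  have hpair : ∀ j l : ι, ∑ t : ι → α, (∏ k, q (t k)) * (f (t j) * f (t l))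
      = if j = l then ∑ a, q a * f a ^ 2 else 0 := by
    intro j l
    rcases eq_or_ne j l with rfl | hjl
    · rw [if_pos rfl]
      simpa only [← sq] using sum_pi_prod_mul_apply q hq (fun a => f a ^ 2) j
    · simp [sum_pi_prod_mul_apply_mul_apply q hq f f hjl, hf, hjl]
  calc ∑ t : ι → α, (∏ k, q (t k)) * (∑ k, f (t k)) ^ 2
      = ∑ j, ∑ l, ∑ t : ι → α, (∏ k, q (t k)) * (f (t j) * f (t l)) := by
        simp_rw [sq, sum_mul_sum, mul_sum]
        rw [sum_comm]
        exact sum_congr rfl fun j _ => sum_comm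
    _ = Fintype.card ι * ∑ a, q a * f a ^ 2 := by simp [hpair]

end ProductWeights

noncomputable def varentropy {α : Type*} [Fintype α] (q : α → ℝ) : ℝ :=
  ∑ a, q a * (-Real.logb 2 (q a) - shEntropy q) ^ 2

section SmallSets
variable {α ι : Type*} [Fintype α] [Fintype ι] [DecidableEq ι] {q : α → ℝ}

theorem sum_pi_prod_filter_le_abs_sum_le [Nonempty ι] (hq0 : ∀ a, 0 ≤ q a)
    (hq1 : ∑ a, q a = 1) (f : α → ℝ) (hf : ∑ a, q a * f a = 0) {δ : ℝ} (hδ : 0 < δ) :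
    ∑ t : ι → α with Fintype.card ι * δ ≤ |∑ k, f (t k)|, ∏ k, q (t k)
      ≤ (∑ a, q a * f a ^ 2) / (Fintype.card ι * δ ^ 2) := by
  have hcard : (0 : ℝ) < Fintype.card ι := by exact_mod_cast Fintype.card_pos
  have hcheb := sq_mul_sum_filter_le_abs_le univ (fun t : ι → α => ∏ k, q (t k))
    (fun t => ∑ k, f (t k)) (fun t _ => prod_nonneg fun k _ => hq0 _)
    (by positivity : 0 ≤ (Fintype.card ι : ℝ) * δ)
  rw [sum_pi_prod_mul_sum_sq q hq1 f hf] at hcheb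
  rw [le_div_iff₀ (by positivity)]
  refine le_of_mul_le_mul_left ?_ hcard
  linarith

theorem sum_mul_neg_logb_sub_shEntropy (hq1 : ∑ a, q a = 1) :
    ∑ a, q a * (-Real.logb 2 (q a) - shEntropy q) = 0 := by
  simp only [mul_sub, sum_sub_distrib, ← sum_mul, hq1, shEntropy, mul_neg,
    sum_neg_distrib]
  ring

theorem sum_pi_prod_le_card_mul_add_varentropy [Nonempty ι] (hq0 : ∀ a, 0 ≤ q a)
    (hq1 : ∑ a, q a = 1) (T : Finset (ι → α)) {δ : ℝ} (hδ : 0 < δ) :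
    ∑ t ∈ T, ∏ k, q (t k)
      ≤ T.card * 2 ^ (-(Fintype.card ι * (shEntropy q - δ)))
        + varentropy q / (Fintype.card ι * δ ^ 2) := by
  set f : α → ℝ := fun a => -Real.logb 2 (q a) - shEntropy q
  set atypical : (ι → α) → Prop := fun t => Fintype.card ι * δ ≤ |∑ k, f (t k)|
  rw [← sum_filter_not_add_sum_filter T atypical]
  gcongr ?_ + ?_
  · have htypical : ∀ t, ¬ atypical t →
        ∏ k, q (t k) ≤ 2 ^ (-(Fintype.card ι * (shEntropy q - δ))) := by
      intro t ht
      refine (prod_le_rpow_sum_logb (fun k _ => hq0 _) two_pos (by norm_num)).trans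
        (Real.rpow_le_rpow_of_exponent_le one_le_two ?_)
      have hsum : ∑ k, f (t k)
          = -∑ k, Real.logb 2 (q (t k)) - Fintype.card ι * shEntropy q := by
        simp [f, sum_sub_distrib]
      have := neg_abs_le (∑ k, f (t k))
      simp only [atypical, not_le] at ht
      linarith
    calc ∑ t ∈ T with ¬ atypical t, ∏ k, q (t k)
        ≤ ∑ t ∈ T with ¬ atypical t, (2 : ℝ) ^ (-(Fintype.card ι * (shEntropy q - δ))) :=
          sum_le_sum fun t ht => htypical t (mem_filter.mp ht).2
      _ ≤ T.card * 2 ^ (-(Fintype.card ι * (shEntropy q - δ))) := by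
          rw [sum_const, nsmul_eq_mul]
          gcongr
          exact filter_subset _ T
  · calc ∑ t ∈ T with atypical t, ∏ k, q (t k)
        ≤ ∑ t : ι → α with atypical t, ∏ k, q (t k) :=
          sum_le_sum_of_subset_of_nonneg (filter_subset_filter atypical T.subset_univ)
            fun t _ _ => prod_nonneg fun k _ => hq0 _
      _ ≤ varentropy q / (Fintype.card ι * δ ^ 2) :=
          sum_pi_prod_filter_le_abs_sum_le hq0 hq1 f (sum_mul_neg_logb_sub_shEntropy hq1) hδ

end SmallSets

open Filter Topology in
theorem tendsto_sum_pi_prod_of_card_le_two_rpow {α : Type*} [Fintype α] {q : α → ℝ}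
    (hq0 : ∀ a, 0 ≤ q a) (hq1 : ∑ a, q a = 1) {R : ℝ} (hR : R < shEntropy q)
    (T : ∀ n, Finset (Fin n → α)) (hT : ∀ n, ((T n).card : ℝ) ≤ 2 ^ ((n : ℝ) * R)) :
    Tendsto (fun n => ∑ t ∈ T n, ∏ k, q (t k)) atTop (𝓝 0) := by
  set δ := (shEntropy q - R) / 2
  have hδ : 0 < δ := by simp only [δ]; linarith
  have hbound : ∀ n ≥ 1, ∑ t ∈ T n, ∏ k, q (t k)
      ≤ ((2 : ℝ) ^ (-δ)) ^ n + varentropy q / δ ^ 2 / n := by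
    intro n hn
    have : Nonempty (Fin n) := ⟨⟨0, hn⟩⟩
    refine (sum_pi_prod_le_card_mul_add_varentropy hq0 hq1 (T n) hδ).trans ?_
    rw [Fintype.card_fin, div_div, mul_comm (δ ^ 2)]
    gcongr
    calc ((T n).card : ℝ) * 2 ^ (-(n * (shEntropy q - δ)))
        ≤ 2 ^ ((n : ℝ) * R) * 2 ^ (-(n * (shEntropy q - δ))) := by gcongr; exact hT n
      _ = ((2 : ℝ) ^ (-δ)) ^ n := by
        rw [← Real.rpow_add two_pos, ← Real.rpow_mul_natCast two_pos.le]
        congr 1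
        simp only [δ]
        ring
  have hlim : Tendsto (fun n : ℕ => ((2 : ℝ) ^ (-δ)) ^ n + varentropy q / δ ^ 2 / n)
      atTop (𝓝 0) := by
    simpa using (tendsto_pow_atTop_nhds_zero_of_lt_one (by positivity)
      (Real.rpow_lt_one_of_one_lt_of_neg one_lt_two (neg_neg_of_pos hδ))).add
        (tendsto_const_div_atTop_nhds_zero_nat (varentropy q / δ ^ 2))
  refine squeeze_zero' (Eventually.of_forall fun n => ?_)
    ((eventually_ge_atTop 1).mono hbound) hlim
  exact sum_nonneg fun t _ => prod_nonneg fun k _ => hq0 _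

section Pushforward
variable {U S ι : Type*} [Fintype U] [Fintype ι] [DecidableEq ι] (p : U → ℝ) (c : U → S)

theorem sum_comp_eq_prod_Pclass (t : ι → S) :
    ∑ x : ι → U with c ∘ x = t, ∏ k, p (x k) = ∏ k, Pclass p c (t k) := by
  simp only [Pclass, Fintype.prod_sum, Fintype.prod_ite_zero, sum_filter, funext_iff,
    Function.comp_apply]

theorem sum_comp_mem_eq_sum_prod_Pclass (T : Finset (ι → S)) :
    ∑ x : ι → U with c ∘ x ∈ T, ∏ k, p (x k) = ∑ t ∈ T, ∏ k, Pclass p c (t k) := by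
  rw [← sum_fiberwise_of_maps_to (g := (c ∘ ·)) fun x hx => (mem_filter.mp hx).2]
  refine sum_congr rfl fun t ht => ?_
  rw [filter_filter, ← sum_comp_eq_prod_Pclass]
  congr 1
  ext x
  simp only [mem_filter, mem_univ, true_and, and_iff_right_iff_imp]
  rintro rfl
  exact ht

end Pushforward

theorem Pclass_nonneg {U S : Type*} [Fintype U] {p : U → ℝ} (hp0 : ∀ u, 0 ≤ p u)
    (c : U → S) (s : S) : 0 ≤ Pclass p c s :=
  sum_nonneg fun u _ => by split_ifs <;> simp [hp0 u]

theorem sum_Pclass {U S : Type*} [Fintype U] [Fintype S] (p : U → ℝ) (c : U → S) :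
    ∑ s, Pclass p c s = ∑ u, p u := by
  simp only [Pclass]
  rw [sum_comm]
  simp

theorem semantic_source_coding_converse_general
    {U S : Type*} [Fintype U] [Fintype S]
    (p : U → ℝ) (hp0 : ∀ u, 0 ≤ p u) (hp1 : ∑ u : U, p u = 1)
    (c : U → S)
    (R : ℝ) (hR : R < semEntropy p c)
    (m : ℕ → ℕ) (hm : ∀ n, (m n : ℝ) ≤ 2 ^ ((n : ℝ) * R))
    (φ : ∀ n, (Fin n → U) → Fin (m n)) (ψ : ∀ n, Fin (m n) → Fin n → U) :
    Filter.Tendsto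
      (fun n : ℕ =>
        ∑ x ∈ Finset.univ.filter (fun x : Fin n → U =>
            ∃ k : Fin n, c (ψ n (φ n x) k) ≠ c (x k)),
          ∏ k : Fin n, p (x k))
      Filter.atTop (nhds 1) := by
  set success := fun n : ℕ =>
    ∑ x : Fin n → U with c ∘ ψ n (φ n x) = c ∘ x, ∏ k, p (x k)
  have herror : ∀ n : ℕ, ∑ x : Fin n → U with ∃ k, c (ψ n (φ n x) k) ≠ c (x k),
      ∏ k, p (x k) = 1 - success n := by
    intro n
    rw [← sum_pi_prod_eq_one (ι := Fin n) p hp1, ← sum_filter_not_add_sum_filter univ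
      fun x : Fin n → U => c ∘ ψ n (φ n x) = c ∘ x, add_sub_cancel_right]
    simp [Function.ne_iff]
  set T : ∀ n, Finset (Fin n → S) := fun n => univ.image fun y => c ∘ ψ n y
  have hT : ∀ n, ((T n).card : ℝ) ≤ 2 ^ ((n : ℝ) * R) := fun n =>
    (Nat.cast_le.mpr (card_image_le.trans (by simp))).trans (hm n)
  have hsuccess : ∀ n, success n ≤ ∑ t ∈ T n, ∏ k, Pclass p c (t k) := by
    intro n
    rw [← sum_comp_mem_eq_sum_prod_Pclass]
    refine sum_le_sum_of_subset_of_nonneg (fun x hx => ?_)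
      fun x _ _ => prod_nonneg fun k _ => hp0 _
    rw [mem_filter] at hx ⊢
    exact ⟨mem_univ x, hx.2 ▸ mem_image_of_mem _ (mem_univ (φ n x))⟩
  have hsuccess_nonneg : ∀ n, 0 ≤ success n := fun n =>
    sum_nonneg fun x _ => prod_nonneg fun k _ => hp0 _
  have hR' : R < shEntropy (Pclass p c) := hR
  have hlim := (squeeze_zero hsuccess_nonneg hsuccess
    (tendsto_sum_pi_prod_of_card_le_two_rpow (Pclass_nonneg hp0 c)
      ((sum_Pclass p c).trans hp1) hR' T hT)).const_sub 1
  simpa [herror] using hlim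

/-- Semantic source coding theorem, converse part: Let `p` be a pmf on a finite
set `U` and let a partition of `U` be encoded by a surjective class-index map `c : U → S`.
If `R < H_s(Ũ)`, then for any sequence of codes with message sets `Fin (m n)`,
`m n ≤ 2^{nR}`, encoders `φ n : U^n → Fin (m n)` and decoders `ψ n : Fin (m n) → U^n`,
the error probability
`P_e^(n) = Pr(∃ k ≤ n, s(ψ_n(φ_n(U_1,…,U_n))_k) ≠ s(U_k))` tends to `1` as `n → ∞`,
where `U_1,…,U_n` are i.i.d. with distribution `p`. -/
theorem semantic_source_coding_converse
    {U S : Type*} [Fintype U] [Fintype S]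
    (p : U → ℝ) (hp0 : ∀ u, 0 ≤ p u) (hp1 : ∑ u : U, p u = 1)
    (c : U → S) (hc : Function.Surjective c)
    (R : ℝ) (hR : R < semEntropy p c)
    (m : ℕ → ℕ) (hm : ∀ n, (m n : ℝ) ≤ 2 ^ ((n : ℝ) * R))
    (φ : ∀ n, (Fin n → U) → Fin (m n)) (ψ : ∀ n, Fin (m n) → Fin n → U) :
    Filter.Tendsto
      (fun n : ℕ =>
        ∑ x ∈ Finset.univ.filter (fun x : Fin n → U =>
            ∃ k : Fin n, c (ψ n (φ n x) k) ≠ c (x k)),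
          ∏ k : Fin n, p (x k))
      Filter.atTop (nhds 1) :=
  semantic_source_coding_converse_general p hp0 hp1 c R hR m hm φ ψ
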